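/- arXiv:2209.07004 — 4 statements merged into one kernel-verified Lean document; each statement's English description precedes it below -/
import Mathlib

section
/- Let γ > 0 and let x be a steady state of the SBCM. Suppose there exists a persuadable node i such that (1 − w_ij(x))·(x_j − x_i)² > 1/(2γ) for every neighbor j of i. Then the Jacobian block J_𝒫(x) has at least one strictly positive real eigenvalue; in particular, the steady state x is linearly unstable. -/
/-!
At a steady state the numerator of `F_i` vanishes, so the Jacobian block is `D⁻¹ L`, where
`D = diag(s_i)` holds the (positive) strengths and `L = A - diag(A 1)` is the Laplacian-type
matrix of the symmetric linearised weights `a_ij = w_ij (1 - 2γ (1 - w_ij)(x_j - x_i)²)`.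
Conjugating by `D^{1/2}` makes `D⁻¹ L` similar to the symmetric matrix `D^{-1/2} L D^{-1/2}`,
which has a positive eigenvalue as soon as it has a positive diagonal entry (otherwise it would
be negative semidefinite). The hypothesis at node `i` makes every `a_ij` non-positive and at
least one negative, hence `L_ii = -∑_j a_ij > 0`.
-/

open Finset Filter

namespace SBCM

variable {V : Type*} [Fintype V] [DecidableEq V]

/-- Sigmoidal influence weight. -/
noncomputable def wt (G : SimpleGraph V) [DecidableRel G.Adj] (γ δ : ℝ) (x : V → ℝ)
    (i j : V) : ℝ :=
  if G.Adj i j then 1 / (1 + Real.exp (γ * (x i - x j) ^ 2 - γ * δ)) else 0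

/-- SBCM update operator. -/
noncomputable def F (G : SimpleGraph V) [DecidableRel G.Adj] (Z : Finset V) (γ δ : ℝ)
    (x : V → ℝ) (i : V) : ℝ :=
  if i ∈ Z then 0
  else (∑ j, wt G γ δ x i j * (x j - x i)) / (∑ j, wt G γ δ x i j)

/-- Jacobian block over the persuadable nodes. -/
noncomputable def Jp (G : SimpleGraph V) [DecidableRel G.Adj] (Z : Finset V) (γ δ : ℝ)
    (x : V → ℝ) : Matrix {v : V // v ∉ Z} {v : V // v ∉ Z} ℝ :=
  fun i j => fderiv ℝ (fun y : V → ℝ => F G Z γ δ y i.val) x (Pi.single (j : V) (1 : ℝ))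

/-- `μ` is a (real) eigenvalue of the matrix `M`. -/
def HasEig {n : Type*} [Fintype n] (M : Matrix n n ℝ) (μ : ℝ) : Prop :=
  ∃ φ : n → ℝ, φ ≠ 0 ∧ M.mulVec φ = μ • φ

/-- All eigenvalues of `M` are strictly negative. -/
def LinStable {n : Type*} [Fintype n] (M : Matrix n n ℝ) : Prop :=
  ∀ μ : ℝ, HasEig M μ → μ < 0

/-- `M` has a strictly positive eigenvalue. -/
def LinUnstable {n : Type*} [Fintype n] (M : Matrix n n ℝ) : Prop :=
  ∃ μ : ℝ, 0 < μ ∧ HasEig M μ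

end SBCM

namespace SBCM

section LinearAlgebra

variable {n : Type*} [Fintype n]

theorem HasEig.of_diagonal_conj {M S : Matrix n n ℝ} {r : n → ℝ} (hr : ∀ u, r u ≠ 0)
    (hS : ∀ u v, S u v = r u * M u v / r v) {μ : ℝ} (h : HasEig S μ) : HasEig M μ := by
  obtain ⟨ψ, hψ, hSψ⟩ := h
  refine ⟨fun v => ψ v / r v, fun h0 => hψ (funext fun v => ?_), funext fun u => ?_⟩
  · simpa [hr v] using congrFun h0 v
  · have hrow : ∑ v, S u v * ψ v = μ * ψ u := congrFun hSψ u
    simp only [Matrix.mulVec, dotProduct, Pi.smul_apply, smul_eq_mul]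
    calc ∑ v, M u v * (ψ v / r v) = (r u)⁻¹ * ∑ v, S u v * ψ v := by
          rw [mul_sum]
          refine sum_congr rfl fun v _ => ?_
          rw [hS]
          field_simp [hr u, hr v]
      _ = μ * (ψ u / r u) := by
          rw [hrow]
          field_simp

theorem linUnstable_of_isHermitian {S : Matrix n n ℝ} (hS : S.IsHermitian) {k : n}
    (hk : 0 < S k k) : LinUnstable S := by
  classical
  have hneg := hS.neg
  by_cases h : ∃ j, hneg.eigenvalues j < 0
  · obtain ⟨j, hj⟩ := h
    refine ⟨-hneg.eigenvalues j, by linarith, _,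
      (WithLp.ofLp_eq_zero 2).ne.2 (hneg.eigenvectorBasis.orthonormal.ne_zero j), ?_⟩
    have hvec := hneg.mulVec_eigenvectorBasis j
    rw [Matrix.neg_mulVec] at hvec
    rw [neg_smul, ← hvec, neg_neg]
  · push Not at h
    have hdiag := (hneg.posSemidef_iff_eigenvalues_nonneg.mpr h).diag_nonneg (i := k)
    simp only [Matrix.neg_apply, Left.nonneg_neg_iff] at hdiag
    linarith

theorem linUnstable_inv_mul_of_isSymm {s : n → ℝ} (hs : ∀ u, 0 < s u) {B : Matrix n n ℝ}
    (hB : B.IsSymm) {k : n} (hk : 0 < B k k) :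
    LinUnstable (Matrix.of fun u v => (s u)⁻¹ * B u v) := by
  set r : n → ℝ := fun u => √(s u)
  have hr : ∀ u, 0 < r u := fun u => Real.sqrt_pos.2 (hs u)
  have hrr : ∀ u, r u * r u = s u := fun u => Real.mul_self_sqrt (hs u).le
  have hS : (Matrix.of fun u v => B u v / (r u * r v)).IsHermitian := by
    rw [Matrix.isHermitian_iff_isSymm]
    refine Matrix.IsSymm.ext fun u v => ?_
    simp only [Matrix.of_apply, hB.apply u v, mul_comm (r u)]
  obtain ⟨μ, hμ, hSμ⟩ := linUnstable_of_isHermitian hS (k := k) (by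
    simpa using div_pos hk (mul_pos (hr k) (hr k)))
  refine ⟨μ, hμ, hSμ.of_diagonal_conj (fun u => (hr u).ne') fun u v => ?_⟩
  simp only [Matrix.of_apply, ← hrr u]
  field_simp [(hr u).ne', (hr v).ne']

end LinearAlgebra

variable {V : Type*} (G : SimpleGraph V) [DecidableRel G.Adj] (γ δ : ℝ)

noncomputable def sig (t : ℝ) : ℝ := 1 / (1 + Real.exp (γ * t ^ 2 - γ * δ))

theorem hasDerivAt_sig (t : ℝ) :
    HasDerivAt (sig γ δ) (-(2 * γ * t) * (sig γ δ t * (1 - sig γ δ t))) t := by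
  have hpos : 0 < 1 + Real.exp (γ * t ^ 2 - γ * δ) := by positivity
  have hexp : HasDerivAt (fun s : ℝ => 1 + Real.exp (γ * s ^ 2 - γ * δ))
      (Real.exp (γ * t ^ 2 - γ * δ) * (γ * (2 * t))) t := by
    simpa using ((((hasDerivAt_pow 2 t).const_mul γ).sub_const (γ * δ)).exp).const_add 1
  refine ((hexp.inv hpos.ne').congr_deriv ?_).congr_of_eventuallyEq
    (Eventually.of_forall fun s => one_div _)
  rw [sig]
  field_simp
  ring

theorem wt_eq_ite (x : V → ℝ) (i j : V) :
    wt G γ δ x i j = if G.Adj i j then sig γ δ (x i - x j) else 0 := rfl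

theorem wt_pos {x : V → ℝ} {i j : V} (h : G.Adj i j) : 0 < wt G γ δ x i j := by
  rw [wt, if_pos h]
  positivity

theorem wt_nonneg (x : V → ℝ) (i j : V) : 0 ≤ wt G γ δ x i j := by
  by_cases h : G.Adj i j
  · exact (wt_pos G γ δ h).le
  · simp [wt, h]

theorem wt_comm (x : V → ℝ) (i j : V) : wt G γ δ x i j = wt G γ δ x j i := by
  have hsq : (x j - x i) ^ 2 = (x i - x j) ^ 2 := by ring
  simp only [wt, hsq]
  exact if_congr (G.adj_comm i j) rfl rfl

/-- `a_ij = ∂/∂x_j (w_ij(x) (x_j - x_i))` for `j ≠ i`. -/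
noncomputable def linWt (x : V → ℝ) (i j : V) : ℝ :=
  wt G γ δ x i j * (1 - 2 * γ * (1 - wt G γ δ x i j) * (x j - x i) ^ 2)

theorem linWt_comm (x : V → ℝ) (i j : V) : linWt G γ δ x i j = linWt G γ δ x j i := by
  rw [linWt, linWt, wt_comm, ← neg_sub (x i), neg_sq]

theorem linWt_of_not_adj {x : V → ℝ} {i j : V} (h : ¬G.Adj i j) : linWt G γ δ x i j = 0 := by
  simp [linWt, wt, h]

theorem linWt_neg {x : V → ℝ} {i j : V} (hγ : 0 < γ) (h : G.Adj i j)
    (hc : (1 - wt G γ δ x i j) * (x j - x i) ^ 2 > 1 / (2 * γ)) : linWt G γ δ x i j < 0 := by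
  rw [gt_iff_lt, div_lt_iff₀ (by positivity)] at hc
  exact mul_neg_of_pos_of_neg (wt_pos G γ δ h) (by linarith)

variable [Fintype V]

noncomputable def strength (x : V → ℝ) (i : V) : ℝ := ∑ j, wt G γ δ x i j

theorem strength_pos {x : V → ℝ} {i j : V} (h : G.Adj i j) : 0 < strength G γ δ x i :=
  sum_pos' (fun k _ => wt_nonneg G γ δ x i k) ⟨j, mem_univ j, wt_pos G γ δ h⟩

theorem hasFDerivAt_wt (x : V → ℝ) (i j : V) :
    HasFDerivAt (fun y => wt G γ δ y i j)
      ((-(2 * γ * (x i - x j)) * (wt G γ δ x i j * (1 - wt G γ δ x i j))) •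
        ((ContinuousLinearMap.proj i : (V → ℝ) →L[ℝ] ℝ) - ContinuousLinearMap.proj j)) x := by
  by_cases h : G.Adj i j
  · simp only [wt_eq_ite, if_pos h]
    exact (hasDerivAt_sig γ δ _).comp_hasFDerivAt x
      ((hasFDerivAt_apply i x).sub (hasFDerivAt_apply j x))
  · simpa [wt, h] using hasFDerivAt_const (0 : ℝ) x

theorem hasFDerivAt_wt_mul_sub (x : V → ℝ) (i j : V) :
    HasFDerivAt (fun y => wt G γ δ y i j * (y j - y i))
      (linWt G γ δ x i j •
        ((ContinuousLinearMap.proj j : (V → ℝ) →L[ℝ] ℝ) - ContinuousLinearMap.proj i)) x := by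
  refine ((hasFDerivAt_wt G γ δ x i j).mul
    ((hasFDerivAt_apply j x).sub (hasFDerivAt_apply i x)))
    |>.congr_fderiv ?_
  ext y
  simp only [Pi.sub_apply, add_apply, smul_apply, sub_apply, ContinuousLinearMap.proj_apply,
    smul_eq_mul, linWt]
  ring

variable [DecidableEq V]

theorem sum_wt_mul_sub_eq_zero {Z : Finset V} {x : V → ℝ} {i : V} (hss : F G Z γ δ x i = 0)
    (hi : i ∉ Z) (hs : strength G γ δ x i ≠ 0) :
    ∑ j, wt G γ δ x i j * (x j - x i) = 0 := by
  rw [F, if_neg hi] at hss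
  exact (div_eq_zero_iff.1 hss).resolve_right hs

theorem hasFDerivAt_F {Z : Finset V} {x : V → ℝ} {i : V} (hi : i ∉ Z)
    (hN : ∑ j, wt G γ δ x i j * (x j - x i) = 0) (hs : strength G γ δ x i ≠ 0) :
    HasFDerivAt (fun y => F G Z γ δ y i)
      ((strength G γ δ x i)⁻¹ • ∑ j, linWt G γ δ x i j •
        ((ContinuousLinearMap.proj j : (V → ℝ) →L[ℝ] ℝ) - ContinuousLinearMap.proj i)) x := by
  have hinv : HasFDerivAt (fun y => (strength G γ δ y i)⁻¹) _ x :=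
    ((DifferentiableAt.fun_sum fun j _ => (hasFDerivAt_wt G γ δ x i j).differentiableAt).inv
      hs).hasFDerivAt
  have hprod :=
    (HasFDerivAt.fun_sum (u := univ) fun j _ => hasFDerivAt_wt_mul_sub G γ δ x i j).mul hinv
  rw [hN, zero_smul, zero_add] at hprod
  refine hprod.congr_of_eventuallyEq (Eventually.of_forall fun y => ?_)
  simp only [F, if_neg hi, div_eq_mul_inv, strength, Pi.mul_apply]

noncomputable def linLap (x : V → ℝ) : Matrix V V ℝ :=
  Matrix.of (linWt G γ δ x) - Matrix.diagonal fun u => ∑ j, linWt G γ δ x u j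

theorem isSymm_linLap (x : V → ℝ) : (linLap G γ δ x).IsSymm :=
  (Matrix.IsSymm.ext fun u v => linWt_comm G γ δ x v u).sub (Matrix.isSymm_diagonal _)

theorem linLap_self_pos {x : V → ℝ} {i : V} (hγ : 0 < γ) (hi : ∃ j, G.Adj i j)
    (hc : ∀ j, G.Adj i j → (1 - wt G γ δ x i j) * (x j - x i) ^ 2 > 1 / (2 * γ)) :
    0 < linLap G γ δ x i i := by
  obtain ⟨j, hj⟩ := hi
  have hle : ∀ k, linWt G γ δ x i k ≤ 0 := fun k => by
    by_cases hk : G.Adj i k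
    · exact (linWt_neg G γ δ hγ hk (hc k hk)).le
    · exact (linWt_of_not_adj G γ δ hk).le
  have hsum : 0 < ∑ k, -linWt G γ δ x i k :=
    sum_pos' (fun k _ => neg_nonneg.2 (hle k))
      ⟨j, mem_univ j, neg_pos.2 (linWt_neg G γ δ hγ hj (hc j hj))⟩
  simpa [linLap, linWt_of_not_adj G γ δ (G.irrefl (v := i))] using hsum

theorem Jp_eq {Z : Finset V} {x : V → ℝ}
    (hN : ∀ u ∉ Z, ∑ j, wt G γ δ x u j * (x j - x u) = 0)
    (hs : ∀ u ∉ Z, strength G γ δ x u ≠ 0) :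
    Jp G Z γ δ x = Matrix.of fun u v : {v // v ∉ Z} =>
      (strength G γ δ x u)⁻¹ * linLap G γ δ x (u : V) (v : V) := by
  ext u v
  rw [Jp, (hasFDerivAt_F G γ δ u.2 (hN u u.2) (hs u u.2)).fderiv]
  simp [linLap, Matrix.diagonal_apply, Pi.single_apply, mul_sub, sum_sub_distrib]

end SBCM

theorem stmt_0_general {V : Type*} [Fintype V] [DecidableEq V]
    (G : SimpleGraph V) [DecidableRel G.Adj] (Z : Finset V)
    (hnbr : ∀ i : V, i ∉ Z → ∃ j, G.Adj i j)
    (γ δ : ℝ) (hγ : 0 < γ)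
    (x : V → ℝ) (hss : ∀ i, SBCM.F G Z γ δ x i = 0)
    (i : V) (hiP : i ∉ Z)
    (hcond : ∀ j, G.Adj i j →
      (1 - SBCM.wt G γ δ x i j) * (x j - x i) ^ 2 > 1 / (2 * γ)) :
    SBCM.LinUnstable (SBCM.Jp G Z γ δ x) := by
  have hs : ∀ u ∉ Z, 0 < SBCM.strength G γ δ x u := fun u hu =>
    SBCM.strength_pos G γ δ (hnbr u hu).choose_spec
  have hN : ∀ u ∉ Z, ∑ j, SBCM.wt G γ δ x u j * (x j - x u) = 0 := fun u hu =>
    SBCM.sum_wt_mul_sub_eq_zero G γ δ (hss u) hu (hs u hu).ne'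
  rw [SBCM.Jp_eq G γ δ hN fun u hu => (hs u hu).ne']
  exact SBCM.linUnstable_inv_mul_of_isSymm (fun u : {v // v ∉ Z} => hs u u.2)
    ((SBCM.isSymm_linLap G γ δ x).submatrix Subtype.val) (k := ⟨i, hiP⟩)
    (SBCM.linLap_self_pos G γ δ hγ (hnbr i hiP) hcond)

/-- If at a steady state some persuadable node `i` satisfies
`(1 − w_ij)(x_j − x_i)² > 1/(2γ)` for every neighbor `j`, then the Jacobian block
`J_𝒫` has a strictly positive eigenvalue, i.e., the steady state is linearly unstable. -/
theorem stmt_0 {V : Type*} [Fintype V] [DecidableEq V]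
    (G : SimpleGraph V) [DecidableRel G.Adj] (Z : Finset V)
    (hnbr : ∀ i : V, i ∉ Z → ∃ j, G.Adj i j)
    (γ δ : ℝ) (hγ : 0 < γ) (hδ : 0 ≤ δ)
    (x : V → ℝ) (hss : ∀ i, SBCM.F G Z γ δ x i = 0)
    (i : V) (hiP : i ∉ Z)
    (hcond : ∀ j, G.Adj i j →
      (1 - SBCM.wt G γ δ x i j) * (x j - x i) ^ 2 > 1 / (2 * γ)) :
    SBCM.LinUnstable (SBCM.Jp G Z γ δ x) :=
  stmt_0_general G Z hnbr γ δ hγ x hss i hiP hcond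
end

section
/- Suppose 𝒢 has at least one zealot, the subgraph induced on the persuadable nodes 𝒫 is connected, and at least one persuadable node is adjacent to a zealot. Let x̄ be the harmonic state, i.e., the unique steady state of F_0 (the γ = 0 dynamics) for the fixed zealot opinions. Then there exist ε > 0, an open neighborhood U ⊆ ℝ^𝒫 of the persuadable part of x̄, and a unique continuously differentiable function h : [0, ε) → U such that: (1) h(0) equals the persuadable part of x̄; (2) for every γ ∈ [0, ε), the opinion vector with persuadable part h(γ) and the fixed zealot opinions is the unique steady state of F_γ whose persuadable part lies in U; and (3) for every γ ∈ [0, ε), this steady state is linearly stable. -/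
open Finset Filter

namespace SBCM

/-- Glue a vector of persuadable opinions with the fixed zealot opinions of `x̄`. -/
noncomputable def glue {V : Type*} [Fintype V] [DecidableEq V] (Z : Finset V)
    (xbar : V → ℝ) (p : {v : V // v ∉ Z} → ℝ) : V → ℝ :=
  fun v => if h : v ∉ Z then p ⟨v, h⟩ else xbar v

end SBCM

/-!
At `γ = 0` the dynamics is the Taylor model `F₀ᵢ x = -(L x)ᵢ / dᵢ`, `L` the graph Laplacian, so on
the persuadable block `D · J₀ = -L_𝒫𝒫` with `D` the diagonal of degrees. Since `𝒫` is connected and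
touches a zealot, the grounded Laplacian `L_𝒫𝒫` is positive definite; in particular `J₀` is
invertible, and the implicit function theorem for `(γ, p) ↦ F_γ` (zealots frozen at `x̄`) gives the
`C¹` branch and its local uniqueness. For stability, `J φ = μ φ` gives
`φ ⬝ (D J) φ = μ · φ ⬝ D φ`, so every real eigenvalue of `J` is negative as soon as the (not
necessarily symmetric) quadratic form of `D J` is negative definite. That is an open condition on
`J`, true at `γ = 0`, hence along the branch near `γ = 0`.
-/

open Matrix Metric Topology

section ImplicitBranch

variable {𝕜 : Type*} [RCLike 𝕜]
  {E₁ : Type*} [NormedAddCommGroup E₁] [NormedSpace 𝕜 E₁] [CompleteSpace E₁]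
  {E₂ : Type*} [NormedAddCommGroup E₂] [NormedSpace 𝕜 E₂] [CompleteSpace E₂]
  {F : Type*} [NormedAddCommGroup F] [NormedSpace 𝕜 F] [CompleteSpace F]

theorem ContDiffAt.exists_implicit_branch {f : E₁ × E₂ → F} {u : E₁ × E₂}
    (hf : ContDiffAt 𝕜 1 f u) (hinv : (fderiv 𝕜 f u ∘L .inr 𝕜 E₁ E₂).IsInvertible)
    {W : Set (E₁ × E₂)} (hW : W ∈ 𝓝 u) :
    ∃ ε > 0, ∃ U : Set E₂, IsOpen U ∧ u.2 ∈ U ∧ ∃ h : E₁ → E₂,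
      ContDiffOn 𝕜 1 h (ball u.1 ε) ∧ h u.1 = u.2 ∧
      ∀ x ∈ ball u.1 ε, h x ∈ U ∧ f (x, h x) = f u ∧
        (∀ y ∈ U, f (x, y) = f u → y = h x) ∧ (x, h x) ∈ W := by
  set h := hf.implicitFunction one_ne_zero hinv
  have h_self : h u.1 = u.2 := hf.implicitFunction_apply_self one_ne_zero hinv
  have h_smooth := hf.contDiffAt_implicitFunction one_ne_zero hinv
  obtain ⟨ρ, hρ, hρW⟩ := Metric.mem_nhds_iff.mp
    ((hf.eventually_apply_eq_iff_implicitFunction one_ne_zero hinv).and hW)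
  have h_near : ∀ᶠ x in 𝓝 u.1, ContDiffAt 𝕜 1 h x ∧ x ∈ ball u.1 ρ ∧ h x ∈ ball u.2 ρ := by
    refine (h_smooth.eventually (by simp)).and (Filter.Eventually.and (ball_mem_nhds _ hρ) ?_)
    exact h_smooth.continuousAt.preimage_mem_nhds (h_self ▸ ball_mem_nhds _ hρ)
  obtain ⟨ε, hε, hερ⟩ := Metric.eventually_nhds_iff_ball.mp h_near
  refine ⟨ε, hε, ball u.2 ρ, isOpen_ball, mem_ball_self hρ, h,
    fun x hx => (hερ x hx).1.contDiffWithinAt, h_self, fun x hx => ?_⟩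
  obtain ⟨-, hxρ, hhxρ⟩ := hερ x hx
  have h_ball : ∀ y ∈ ball u.2 ρ, (x, y) ∈ ball u ρ := fun y hy => by
    rw [mem_ball, Prod.dist_eq]; exact max_lt hxρ hy
  refine ⟨hhxρ, ((hρW (h_ball _ hhxρ)).1.mpr rfl), fun y hy hfy => ?_, (hρW (h_ball _ hhxρ)).2⟩
  exact ((hρW (h_ball y hy)).1.mp hfy).symm

end ImplicitBranch

theorem ContinuousLinearMap.isInvertible_of_injective {𝕜 E : Type*} [NontriviallyNormedField 𝕜]
    [CompleteSpace 𝕜] [NormedAddCommGroup E] [NormedSpace 𝕜 E] [FiniteDimensional 𝕜 E]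
    {f : E →L[𝕜] E} (hf : Function.Injective f) : f.IsInvertible :=
  ⟨(LinearEquiv.ofInjectiveEndo (f : E →ₗ[𝕜] E) hf).toContinuousLinearEquiv, rfl⟩

section NegDefForm

variable {n : Type*} [Fintype n]

def IsNegDefForm (A : Matrix n n ℝ) : Prop :=
  ∀ φ : n → ℝ, φ ≠ 0 → φ ⬝ᵥ A *ᵥ φ < 0

theorem isOpen_setOf_isNegDefForm : IsOpen {A : Matrix n n ℝ | IsNegDefForm A} := by
  have h_sphere : {A : Matrix n n ℝ | IsNegDefForm A} =
      {A | ∀ φ ∈ sphere (0 : n → ℝ) 1, φ ⬝ᵥ A *ᵥ φ < 0} := by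
    ext A
    refine ⟨fun hA φ hφ => hA φ (ne_zero_of_mem_sphere one_ne_zero ⟨φ, hφ⟩), fun hA φ hφ => ?_⟩
    have hscaled := hA (‖φ‖⁻¹ • φ) (by simp [norm_smul, norm_ne_zero_iff.mpr hφ])
    rw [mulVec_smul, smul_dotProduct, dotProduct_smul, smul_smul, smul_eq_mul] at hscaled
    exact neg_of_mul_neg_right hscaled (by positivity)
  rw [h_sphere, isOpen_iff_eventually]
  intro A hA
  refine (isCompact_sphere 0 1).eventually_forall_of_forall_eventually fun φ hφ => ?_
  have hcont : Continuous fun q : Matrix n n ℝ × (n → ℝ) => q.2 ⬝ᵥ q.1 *ᵥ q.2 :=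
    continuous_snd.dotProduct (continuous_fst.matrix_mulVec continuous_snd)
  exact hcont.continuousAt.eventually (gt_mem_nhds (hA φ hφ))

variable {P M : Matrix n n ℝ}

theorem SBCM.LinStable.of_posDef_of_isNegDefForm_mul (hP : P.PosDef)
    (hPM : IsNegDefForm (P * M)) : SBCM.LinStable M := by
  rintro μ ⟨φ, hφ, hMφ⟩
  have hpos := hP.dotProduct_mulVec_pos hφ
  have hneg := hPM φ hφ
  rw [star_trivial] at hpos
  rw [← mulVec_mulVec, hMφ, mulVec_smul, dotProduct_smul, smul_eq_mul] at hneg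
  exact neg_of_mul_neg_left hneg hpos.le

theorem IsNegDefForm.mulVec_injective (hPM : IsNegDefForm (P * M)) :
    Function.Injective M.mulVec := by
  intro v w hvw
  by_contra hne
  have h := hPM (v - w) (sub_ne_zero.mpr hne)
  rw [← mulVec_mulVec, mulVec_sub, hvw, sub_self, mulVec_zero, dotProduct_zero] at h
  exact lt_irrefl 0 h

end NegDefForm

namespace SBCM

section Weights

variable {V : Type*} (G : SimpleGraph V) [DecidableRel G.Adj]

theorem wt_zero (δ : ℝ) (x : V → ℝ) (i j : V) :
    wt G 0 δ x i j = if G.Adj i j then 1 / 2 else 0 := by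
  unfold wt; split_ifs <;> norm_num

variable [Fintype V]

theorem contDiff_wt {n : WithTop ℕ∞} (δ : ℝ) (i j : V) :
    ContDiff ℝ n fun q : ℝ × (V → ℝ) => wt G q.1 δ q.2 i j := by
  unfold wt
  split_ifs
  · exact contDiff_const.div (contDiff_const.add (Real.contDiff_exp.comp (by fun_prop)))
      fun q => by positivity
  · exact contDiff_const

theorem sum_wt_pos {i j : V} (hij : G.Adj i j) (γ δ : ℝ) (x : V → ℝ) :
    0 < ∑ k, wt G γ δ x i k :=
  Finset.sum_pos' (fun k _ => by unfold wt; split_ifs <;> positivity)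
    ⟨j, Finset.mem_univ j, by simp only [wt, if_pos hij]; positivity⟩

end Weights

section ExtendZero

variable {V : Type*} [DecidableEq V] (Z : Finset V)

noncomputable def extendZero : ({v : V // v ∉ Z} → ℝ) →L[ℝ] (V → ℝ) :=
  ContinuousLinearMap.pi fun v => if h : v ∉ Z then ContinuousLinearMap.proj ⟨v, h⟩ else 0

theorem extendZero_apply_of_notMem (p : {v : V // v ∉ Z} → ℝ) {v : V} (hv : v ∉ Z) :
    extendZero Z p v = p ⟨v, hv⟩ := by
  simp [extendZero, hv]

theorem extendZero_apply_of_mem (p : {v : V // v ∉ Z} → ℝ) {v : V} (hv : v ∈ Z) :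
    extendZero Z p v = 0 := by
  simp [extendZero, hv]

theorem extendZero_single (j : {v : V // v ∉ Z}) (c : ℝ) :
    extendZero Z (Pi.single j c) = Pi.single (j : V) c := by
  ext v
  by_cases hv : v ∈ Z
  · rw [extendZero_apply_of_mem Z _ hv, Pi.single_eq_of_ne (by rintro rfl; exact j.2 hv)]
  · rw [extendZero_apply_of_notMem Z _ hv]
    by_cases hj : v = j
    · subst hj; simp
    · rw [Pi.single_eq_of_ne hj, Pi.single_eq_of_ne (fun h => hj (congrArg Subtype.val h))]

end ExtendZero

variable {V : Type*} [Fintype V] [DecidableEq V] (G : SimpleGraph V) [DecidableRel G.Adj]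
  (Z : Finset V)

theorem contDiff_F {n : WithTop ℕ∞} (δ : ℝ) {i j : V} (hi : i ∉ Z) (hij : G.Adj i j) :
    ContDiff ℝ n fun q : ℝ × (V → ℝ) => F G Z q.1 δ q.2 i := by
  simp only [F, if_neg hi]
  exact (ContDiff.sum fun k _ => (contDiff_wt G δ i k).mul (by fun_prop)).div
    (ContDiff.sum fun k _ => contDiff_wt G δ i k) fun q => (sum_wt_pos G hij q.1 δ q.2).ne'

theorem F_zero_apply (δ : ℝ) {i : V} (hi : i ∉ Z) (y : V → ℝ) :
    F G Z 0 δ y i = -(G.lapMatrix ℝ *ᵥ y) i / G.degree i := by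
  simp only [F, if_neg hi, wt_zero, ite_mul, zero_mul, ← Finset.sum_filter,
    ← G.neighborFinset_eq_filter, Finset.sum_const, G.card_neighborFinset_eq_degree,
    G.lapMatrix_mulVec_apply, ← Finset.mul_sum, Finset.sum_sub_distrib, nsmul_eq_mul]
  rw [mul_comm _ (1 / 2 : ℝ), mul_div_mul_left _ _ (by norm_num), neg_sub]

theorem Jp_zero_apply (δ : ℝ) (x : V → ℝ) (i j : {v : V // v ∉ Z}) :
    Jp G Z 0 δ x i j = -G.lapMatrix ℝ i j / G.degree (i : V) := by
  set ℓ : (V → ℝ) →L[ℝ] ℝ := (-(G.degree (i : V) : ℝ)⁻¹) •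
    (ContinuousLinearMap.proj (i : V)).comp (Matrix.toLin' (G.lapMatrix ℝ)).toContinuousLinearMap
  have hℓ : (fun y => F G Z 0 δ y i) = ℓ := funext fun y => by
    simp [ℓ, F_zero_apply G Z δ i.2, div_eq_inv_mul]
  rw [Jp, hℓ, ℓ.fderiv]
  simp [ℓ, div_eq_inv_mul]

theorem diagonal_degree_mul_Jp_zero (hnbr : ∀ i : V, i ∉ Z → ∃ j, G.Adj i j) (δ : ℝ)
    (x : V → ℝ) :
    diagonal (fun i : {v : V // v ∉ Z} => (G.degree i : ℝ)) * Jp G Z 0 δ x =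
      -(G.lapMatrix ℝ).submatrix (↑) (↑) := by
  ext i j
  have hdeg : (G.degree (i : V) : ℝ) ≠ 0 := by
    exact_mod_cast ((G.degree_pos_iff_exists_adj _).mpr (hnbr i i.2)).ne'
  rw [diagonal_mul, Jp_zero_apply, mul_div_cancel₀ _ hdeg]
  rfl

theorem glue_eq_extendZero_add (xbar : V → ℝ) (p : {v : V // v ∉ Z} → ℝ) :
    glue Z xbar p = extendZero Z p + glue Z xbar 0 := by
  ext v
  by_cases hv : v ∈ Z <;> simp [extendZero, glue, hv]

theorem hasFDerivAt_glue (xbar : V → ℝ) (p : {v : V // v ∉ Z} → ℝ) :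
    HasFDerivAt (glue Z xbar) (extendZero Z) p := by
  rw [show glue Z xbar = fun p => extendZero Z p + glue Z xbar 0 from
    funext (glue_eq_extendZero_add Z xbar)]
  exact (extendZero Z).hasFDerivAt.add_const _

theorem contDiff_glue {n : WithTop ℕ∞} (xbar : V → ℝ) : ContDiff ℝ n (glue Z xbar) := by
  rw [show glue Z xbar = fun p => extendZero Z p + glue Z xbar 0 from
    funext (glue_eq_extendZero_add Z xbar)]
  exact (extendZero Z).contDiff.add contDiff_const

theorem glue_restrict (xbar : V → ℝ) : glue Z xbar (fun v => xbar v) = xbar := by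
  ext v
  by_cases hv : v ∈ Z <;> simp [glue, hv]

theorem sum_extendZero_mul (p : {v : V // v ∉ Z} → ℝ) (g : V → ℝ) :
    ∑ v, extendZero Z p v * g v = ∑ i : {v : V // v ∉ Z}, p i * g i := by
  rw [← Fintype.sum_subtype_add_sum_subtype (· ∈ Z),
    Finset.sum_eq_zero fun i _ => by rw [extendZero_apply_of_mem Z p i.2, zero_mul], zero_add]
  exact Finset.sum_congr rfl fun i _ => by rw [extendZero_apply_of_notMem Z p i.2]

theorem dotProduct_submatrix_mulVec (A : Matrix V V ℝ) (p : {v : V // v ∉ Z} → ℝ) :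
    p ⬝ᵥ A.submatrix (↑) (↑) *ᵥ p = extendZero Z p ⬝ᵥ A *ᵥ extendZero Z p := by
  simp only [dotProduct, mulVec, sum_extendZero_mul, submatrix_apply]
  congr! 2 with i
  simp_rw [mul_comm (A _ _), sum_extendZero_mul]

theorem posDef_lapMatrix_submatrix (hconn : (G.induce {v : V | v ∉ Z}).Connected)
    (hadj : ∃ i z : V, i ∉ Z ∧ z ∈ Z ∧ G.Adj i z) :
    ((G.lapMatrix ℝ).submatrix ((↑) : {v : V // v ∉ Z} → V) (↑)).PosDef := by
  obtain ⟨i₀, z₀, hi₀, hz₀, hi₀z₀⟩ := hadj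
  refine .of_dotProduct_mulVec_pos ((G.isHermitian_lapMatrix ℝ).submatrix _) fun p hp => ?_
  rw [star_trivial, dotProduct_submatrix_mulVec, ← toLinearMap₂'_apply']
  refine lt_of_le_of_ne (by rw [SimpleGraph.lapMatrix_toLinearMap₂']; positivity) fun h => hp ?_
  rw [eq_comm, SimpleGraph.lapMatrix_toLinearMap₂'_apply'_eq_zero_iff_forall_reachable] at h
  ext i
  have hreach : G.Reachable i i₀ :=
    (hconn.preconnected ⟨i, i.2⟩ ⟨i₀, hi₀⟩).map (SimpleGraph.Embedding.induce _).toHom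
  rw [← extendZero_apply_of_notMem Z p i.2, h _ _ (hreach.trans hi₀z₀.reachable),
    extendZero_apply_of_mem Z p hz₀, Pi.zero_apply]

noncomputable def persuadableField (δ : ℝ) (xbar : V → ℝ)
    (q : ℝ × ({v : V // v ∉ Z} → ℝ)) : {v : V // v ∉ Z} → ℝ :=
  fun i => F G Z q.1 δ (glue Z xbar q.2) i

theorem forall_F_glue_eq_zero_iff (γ δ : ℝ) (xbar : V → ℝ) (p : {v : V // v ∉ Z} → ℝ) :
    (∀ i, F G Z γ δ (glue Z xbar p) i = 0) ↔ persuadableField G Z δ xbar (γ, p) = 0 :=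
  ⟨fun h => funext fun i => h i,
    fun h i => if hi : i ∈ Z then by simp [F, hi] else congrFun h ⟨i, hi⟩⟩

variable {G Z}

theorem contDiff_persuadableField {n : WithTop ℕ∞} (hnbr : ∀ i : V, i ∉ Z → ∃ j, G.Adj i j)
    (δ : ℝ) (xbar : V → ℝ) : ContDiff ℝ n (persuadableField G Z δ xbar) := by
  refine contDiff_pi.mpr fun i => ?_
  have hglue : ContDiff ℝ n fun q : ℝ × ({v : V // v ∉ Z} → ℝ) => (q.1, glue Z xbar q.2) :=
    contDiff_fst.prodMk ((contDiff_glue Z xbar).comp contDiff_snd)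
  have hcomp := (contDiff_F (n := n) G Z δ i.2 (hnbr i i.2).choose_spec).comp hglue
  exact hcomp

theorem fderiv_persuadableField_apply_inr (hnbr : ∀ i : V, i ∉ Z → ∃ j, G.Adj i j)
    (γ δ : ℝ) (xbar : V → ℝ) (p v : {v : V // v ∉ Z} → ℝ) :
    fderiv ℝ (persuadableField G Z δ xbar) (γ, p) (0, v) = Jp G Z γ δ (glue Z xbar p) *ᵥ v := by
  set T := fun i : {v : V // v ∉ Z} => fderiv ℝ (fun y => F G Z γ δ y i) (glue Z xbar p)
  have hF : ∀ i : {v : V // v ∉ Z}, Differentiable ℝ (fun y => F G Z γ δ y i) := fun i =>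
    ((contDiff_F G Z δ i.2 (hnbr i i.2).choose_spec).comp
      (contDiff_const.prodMk contDiff_id)).differentiable one_ne_zero
  have hpartial : HasFDerivAt (fun p' => persuadableField G Z δ xbar (γ, p'))
      (ContinuousLinearMap.pi fun i => T i ∘L extendZero Z) p :=
    hasFDerivAt_pi.mpr fun i => ((hF i) _).hasFDerivAt.comp p (hasFDerivAt_glue Z xbar p)
  have hjoint : HasFDerivAt (fun p' => persuadableField G Z δ xbar (γ, p'))
      (fderiv ℝ (persuadableField G Z δ xbar) (γ, p) ∘L .inr ℝ ℝ _) p :=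
    ((contDiff_persuadableField (n := 1) hnbr δ xbar).differentiable one_ne_zero
      _).hasFDerivAt.comp p (hasFDerivAt_prodMk_right γ p)
  have hT := congrArg (fun L : _ →L[ℝ] _ => L v) (hjoint.unique hpartial)
  simp only [ContinuousLinearMap.comp_apply, ContinuousLinearMap.inr_apply] at hT
  have hS : LinearMap.toMatrix' (ContinuousLinearMap.pi fun i => T i ∘L extendZero Z :
      _ →ₗ[ℝ] _) = Jp G Z γ δ (glue Z xbar p) := by
    ext i j
    simp [LinearMap.toMatrix'_apply, extendZero_single, T, Jp]
  rw [hT, ← hS, LinearMap.toMatrix'_mulVec]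
  rfl

theorem continuous_Jp_glue (hnbr : ∀ i : V, i ∉ Z → ∃ j, G.Adj i j) (δ : ℝ) (xbar : V → ℝ) :
    Continuous fun q : ℝ × ({v : V // v ∉ Z} → ℝ) => Jp G Z q.1 δ (glue Z xbar q.2) := by
  have hΦ := (contDiff_persuadableField (n := 1) hnbr δ xbar).continuous_fderiv one_ne_zero
  refine continuous_pi fun i => continuous_pi fun j => ?_
  have hJ : ∀ q : ℝ × ({v : V // v ∉ Z} → ℝ), Jp G Z q.1 δ (glue Z xbar q.2) i j =
      fderiv ℝ (persuadableField G Z δ xbar) q (0, Pi.single j 1) i := fun q => by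
    rw [fderiv_persuadableField_apply_inr hnbr, mulVec_single_one]
    rfl
  simp_rw [hJ]
  exact (continuous_apply i).comp (hΦ.clm_apply continuous_const)

end SBCM

open SBCM in
theorem stmt_3_general {V : Type*} [Fintype V] [DecidableEq V]
    (G : SimpleGraph V) [DecidableRel G.Adj] (Z : Finset V)
    (hconn : (G.induce {v : V | v ∉ Z}).Connected)
    (hnbr : ∀ i : V, i ∉ Z → ∃ j, G.Adj i j)
    (hadj : ∃ i z : V, i ∉ Z ∧ z ∈ Z ∧ G.Adj i z)
    (δ : ℝ)
    (xbar : V → ℝ) (hharm : ∀ i, SBCM.F G Z 0 δ xbar i = 0) :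
    ∃ ε > (0 : ℝ), ∃ U : Set ({v : V // v ∉ Z} → ℝ), IsOpen U ∧
      (fun v : {v : V // v ∉ Z} => xbar v.val) ∈ U ∧
      ∃ h : ℝ → ({v : V // v ∉ Z} → ℝ),
        (ContDiffOn ℝ 1 h (Set.Ico 0 ε) ∧
          h 0 = (fun v : {v : V // v ∉ Z} => xbar v.val) ∧
          ∀ γ ∈ Set.Ico (0 : ℝ) ε,
            h γ ∈ U ∧
            (∀ i, SBCM.F G Z γ δ (SBCM.glue Z xbar (h γ)) i = 0) ∧
            (∀ p ∈ U, (∀ i, SBCM.F G Z γ δ (SBCM.glue Z xbar p) i = 0) → p = h γ) ∧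
            SBCM.LinStable (SBCM.Jp G Z γ δ (SBCM.glue Z xbar (h γ)))) ∧
        (∀ h' : ℝ → ({v : V // v ∉ Z} → ℝ),
          (ContDiffOn ℝ 1 h' (Set.Ico 0 ε) ∧
            h' 0 = (fun v : {v : V // v ∉ Z} => xbar v.val) ∧
            ∀ γ ∈ Set.Ico (0 : ℝ) ε,
              h' γ ∈ U ∧
              (∀ i, SBCM.F G Z γ δ (SBCM.glue Z xbar (h' γ)) i = 0) ∧
              (∀ p ∈ U, (∀ i, SBCM.F G Z γ δ (SBCM.glue Z xbar p) i = 0) → p = h' γ) ∧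
              SBCM.LinStable (SBCM.Jp G Z γ δ (SBCM.glue Z xbar (h' γ)))) →
          Set.EqOn h' h (Set.Ico 0 ε)) := by
  set p₀ : {v : V // v ∉ Z} → ℝ := fun v => xbar v
  set D := diagonal fun i : {v : V // v ∉ Z} => (G.degree (i : V) : ℝ)
  have hD : D.PosDef := .diagonal fun i => by
    exact_mod_cast (G.degree_pos_iff_exists_adj _).mpr (hnbr i i.2)
  have hJ₀ : IsNegDefForm (D * Jp G Z 0 δ (glue Z xbar p₀)) := fun φ hφ => by
    have := (posDef_lapMatrix_submatrix G Z hconn hadj).dotProduct_mulVec_pos hφ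
    rw [diagonal_degree_mul_Jp_zero G Z hnbr, neg_mulVec, dotProduct_neg, neg_neg_iff_pos]
    simpa using this
  have hW : {q | IsNegDefForm (D * Jp G Z q.1 δ (glue Z xbar q.2))} ∈ 𝓝 (0, p₀) :=
    (isOpen_setOf_isNegDefForm.preimage
      (continuous_const.matrix_mul (continuous_Jp_glue hnbr δ xbar))).mem_nhds hJ₀
  have hinv : (fderiv ℝ (persuadableField G Z δ xbar) (0, p₀) ∘L .inr ℝ ℝ _).IsInvertible :=
    ContinuousLinearMap.isInvertible_of_injective fun v w hvw => hJ₀.mulVec_injective (by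
      simpa [fderiv_persuadableField_apply_inr hnbr] using hvw)
  obtain ⟨ε, hε, U, hU, hp₀U, h, hC, h0, hbranch⟩ :=
    (contDiff_persuadableField hnbr δ xbar).contDiffAt.exists_implicit_branch hinv hW
  have hΦ₀ : persuadableField G Z δ xbar (0, p₀) = 0 :=
    (forall_F_glue_eq_zero_iff G Z 0 δ xbar p₀).mp (by rwa [glue_restrict])
  have hIco : Set.Ico 0 ε ⊆ ball 0 ε := by
    rw [Real.ball_eq_Ioo, zero_sub, zero_add]; exact Set.Ico_subset_Ioo_left (neg_lt_zero.mpr hε)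
  have hsteady : ∀ γ ∈ Set.Ico 0 ε, h γ ∈ U ∧ (∀ i, F G Z γ δ (glue Z xbar (h γ)) i = 0) ∧
      (∀ p ∈ U, (∀ i, F G Z γ δ (glue Z xbar p) i = 0) → p = h γ) ∧
      LinStable (Jp G Z γ δ (glue Z xbar (h γ))) := fun γ hγ => by
    obtain ⟨hU, hzero, huniq, hstab⟩ := hbranch γ (hIco hγ)
    simp only [hΦ₀, ← forall_F_glue_eq_zero_iff] at hzero huniq
    exact ⟨hU, hzero, huniq, .of_posDef_of_isNegDefForm_mul hD hstab⟩
  exact ⟨ε, hε, U, hU, hp₀U, h, ⟨hC.mono hIco, h0, hsteady⟩,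
    fun h' ⟨_, _, hh'⟩ γ hγ => (hsteady γ hγ).2.2.1 _ (hh' γ hγ).1 (hh' γ hγ).2.1⟩

/-- If `𝒢` has at least one zealot, the persuadable subgraph is connected,
and some persuadable node is adjacent to a zealot, then around the harmonic state
(the unique steady state of `F₀`) there is a unique `C¹` branch `h : [0, ε) → U` of
steady states of `F_γ`, each of which is the unique steady state with persuadable part
in `U`, and each of which is linearly stable. -/
theorem stmt_3 {V : Type*} [Fintype V] [DecidableEq V]
    (G : SimpleGraph V) [DecidableRel G.Adj] (Z : Finset V)
    (hZ : Z.Nonempty)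
    (hconn : (G.induce {v : V | v ∉ Z}).Connected)
    (hnbr : ∀ i : V, i ∉ Z → ∃ j, G.Adj i j)
    (hadj : ∃ i z : V, i ∉ Z ∧ z ∈ Z ∧ G.Adj i z)
    (δ : ℝ) (hδ : 0 ≤ δ)
    (xbar : V → ℝ) (hharm : ∀ i, SBCM.F G Z 0 δ xbar i = 0) :
    ∃ ε > (0 : ℝ), ∃ U : Set ({v : V // v ∉ Z} → ℝ), IsOpen U ∧
      (fun v : {v : V // v ∉ Z} => xbar v.val) ∈ U ∧
      ∃ h : ℝ → ({v : V // v ∉ Z} → ℝ),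
        (ContDiffOn ℝ 1 h (Set.Ico 0 ε) ∧
          h 0 = (fun v : {v : V // v ∉ Z} => xbar v.val) ∧
          ∀ γ ∈ Set.Ico (0 : ℝ) ε,
            h γ ∈ U ∧
            (∀ i, SBCM.F G Z γ δ (SBCM.glue Z xbar (h γ)) i = 0) ∧
            (∀ p ∈ U, (∀ i, SBCM.F G Z γ δ (SBCM.glue Z xbar p) i = 0) → p = h γ) ∧
            SBCM.LinStable (SBCM.Jp G Z γ δ (SBCM.glue Z xbar (h γ)))) ∧
        (∀ h' : ℝ → ({v : V // v ∉ Z} → ℝ),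
          (ContDiffOn ℝ 1 h' (Set.Ico 0 ε) ∧
            h' 0 = (fun v : {v : V // v ∉ Z} => xbar v.val) ∧
            ∀ γ ∈ Set.Ico (0 : ℝ) ε,
              h' γ ∈ U ∧
              (∀ i, SBCM.F G Z γ δ (SBCM.glue Z xbar (h' γ)) i = 0) ∧
              (∀ p ∈ U, (∀ i, SBCM.F G Z γ δ (SBCM.glue Z xbar p) i = 0) → p = h' γ) ∧
              SBCM.LinStable (SBCM.Jp G Z γ δ (SBCM.glue Z xbar (h' γ)))) →
          Set.EqOn h' h (Set.Ico 0 ε)) :=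
  stmt_3_general G Z hconn hnbr hadj δ xbar hharm
end

section
/- Suppose 𝒢 is connected, has at least one zealot, and its node set 𝒩 is partitioned into sets I and J such that J contains no zealots and there is a node i ∈ I with the property that every path in 𝒢 from a node of J to a zealot passes through i. Then at every steady state x of the SBCM, x_j = x_i for all j ∈ J. -/
/-!
At a steady state every persuadable node is a weighted average of its neighbours, with strictly
positive weights, so the opinions obey a discrete maximum principle away from the zealots.
Let `S` be the set of nodes reachable from `J` by walks avoiding `i`: it contains no zealot, and
its only neighbour outside `S` is `i`. If the maximum of `x` over `S ∪ {i}` were not attained at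
`i`, the maximisers in `S` would form a set closed under adjacency, which by connectivity contains
a zealot. Hence `x ≤ x i` on `J`. Freezing the weights, the balance equations are linear in the
opinions, so the same argument applies to `-x` and gives equality.
-/

open Finset Filter

theorem SimpleGraph.Reachable.mem_of_adj_closed {V : Type*} {G : SimpleGraph V} {A : Set V}
    (hA : ∀ ⦃a b⦄, a ∈ A → G.Adj a b → b ∈ A) {u v : V} (h : G.Reachable u v) (hu : u ∈ A) :
    v ∈ A := by
  rw [SimpleGraph.reachable_iff_reflTransGen] at h
  induction h with
  | refl => exact hu
  | tail _ hbc ih => exact hA ih hbc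

namespace SBCM

variable {V : Type*}

structure IsEdgeWeight (G : SimpleGraph V) (w : V → V → ℝ) : Prop where
  pos_of_adj : ∀ ⦃a b⦄, G.Adj a b → 0 < w a b
  eq_zero_of_not_adj : ∀ ⦃a b⦄, ¬G.Adj a b → w a b = 0

def reachAvoiding (G : SimpleGraph V) (J : Set V) (i : V) : Set V :=
  {v | ∃ j ∈ J, ∃ p : G.Walk j v, i ∉ p.support}

section reachAvoiding

variable {G : SimpleGraph V} {J : Set V} {i : V}

theorem subset_reachAvoiding (hiJ : i ∉ J) : J ⊆ reachAvoiding G J i := fun j hj =>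
  ⟨j, hj, .nil, by simpa [eq_comm] using fun h : i = j => hiJ (h ▸ hj)⟩

theorem mem_reachAvoiding_of_adj {u v : V} (hu : u ∈ reachAvoiding G J i) (huv : G.Adj u v)
    (hvi : v ≠ i) : v ∈ reachAvoiding G J i := by
  obtain ⟨j, hj, p, hp⟩ := hu
  refine ⟨j, hj, p.concat huv, ?_⟩
  simpa [SimpleGraph.Walk.support_concat, hp] using hvi.symm

theorem notMem_of_mem_reachAvoiding {Z : Set V}
    (hcut : ∀ j ∈ J, ∀ z ∈ Z, ∀ p : G.Walk j z, i ∈ p.support) {v : V}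
    (hv : v ∈ reachAvoiding G J i) : v ∉ Z := by
  obtain ⟨j, hj, p, hp⟩ := hv
  exact fun hvZ => hp (hcut j hj v hvZ p)

end reachAvoiding

namespace IsEdgeWeight

variable {G : SimpleGraph V} {w : V → V → ℝ}

theorem nonneg (hw : IsEdgeWeight G w) (a b : V) : 0 ≤ w a b := by
  by_cases h : G.Adj a b
  · exact (hw.pos_of_adj h).le
  · exact (hw.eq_zero_of_not_adj h).ge

variable [Fintype V]

theorem eq_of_adj_of_forall_adj_le (hw : IsEdgeWeight G w) {x : V → ℝ} {k : V}
    (hbal : ∑ j, w k j * (x j - x k) = 0) (hle : ∀ j, G.Adj k j → x j ≤ x k)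
    {u : V} (hu : G.Adj k u) : x u = x k := by
  have hterm : ∀ j ∈ univ, w k j * (x j - x k) ≤ 0 := fun j _ => by
    by_cases hj : G.Adj k j
    · exact mul_nonpos_of_nonneg_of_nonpos (hw.nonneg k j) (sub_nonpos.2 (hle j hj))
    · simp [hw.eq_zero_of_not_adj hj]
  have hu0 := (sum_eq_zero_iff_of_nonpos hterm).1 hbal u (mem_univ u)
  linarith [(mul_eq_zero.1 hu0).resolve_left (hw.pos_of_adj hu).ne']

variable {Z J : Set V} {i : V}

theorem le_of_forall_walk_mem_support (hw : IsEdgeWeight G w) {x : V → ℝ}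
    (hbal : ∀ k ∉ Z, ∑ j, w k j * (x j - x k) = 0) (hconn : G.Connected) (hZ : Z.Nonempty)
    (hiJ : i ∉ J) (hcut : ∀ j ∈ J, ∀ z ∈ Z, ∀ p : G.Walk j z, i ∈ p.support) :
    ∀ j ∈ J, x j ≤ x i := by
  set S := reachAvoiding G J i
  obtain ⟨v, hv, hvmax⟩ :=
    Set.exists_max_image (insert i S) x (Set.toFinite _) (Set.insert_nonempty i S)
  suffices hvi : x v ≤ x i from fun j hj =>
    (hvmax j (Set.mem_insert_of_mem _ (subset_reachAvoiding hiJ hj))).trans hvi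
  by_contra! hlt
  have hclosed : ∀ ⦃a b⦄, a ∈ {u ∈ S | x u = x v} → G.Adj a b → b ∈ {u ∈ S | x u = x v} := by
    rintro a b ⟨haS, hav⟩ hab
    have hnbr : ∀ c, G.Adj a c → c ∈ insert i S := fun c hac =>
      (eq_or_ne c i).imp id (mem_reachAvoiding_of_adj haS hac)
    have hbv : x b = x v := hav ▸ hw.eq_of_adj_of_forall_adj_le
      (hbal a (notMem_of_mem_reachAvoiding hcut haS)) (fun c hac => hav ▸ hvmax c (hnbr c hac)) hab
    exact ⟨(hnbr b hab).resolve_left (by rintro rfl; linarith), hbv⟩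
  have hvS : v ∈ S := hv.resolve_left (by rintro rfl; linarith)
  obtain ⟨z, hz⟩ := hZ
  have hzS := (hconn v z).mem_of_adj_closed hclosed ⟨hvS, rfl⟩
  exact notMem_of_mem_reachAvoiding hcut hzS.1 hz

theorem eq_of_forall_walk_mem_support (hw : IsEdgeWeight G w) {x : V → ℝ}
    (hbal : ∀ k ∉ Z, ∑ j, w k j * (x j - x k) = 0) (hconn : G.Connected) (hZ : Z.Nonempty)
    (hiJ : i ∉ J) (hcut : ∀ j ∈ J, ∀ z ∈ Z, ∀ p : G.Walk j z, i ∈ p.support) :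
    ∀ j ∈ J, x j = x i := by
  have hbal_neg : ∀ k ∉ Z, ∑ j, w k j * ((-x) j - (-x) k) = 0 := fun k hk => by
    rw [← neg_eq_zero, ← sum_neg_distrib, ← hbal k hk]
    congr 1 with j
    simp only [Pi.neg_apply]
    ring
  intro j hj
  exact le_antisymm (hw.le_of_forall_walk_mem_support hbal hconn hZ hiJ hcut j hj)
    (neg_le_neg_iff.1 (hw.le_of_forall_walk_mem_support hbal_neg hconn hZ hiJ hcut j hj))

end IsEdgeWeight

variable (G : SimpleGraph V) [DecidableRel G.Adj]

theorem isEdgeWeight_wt (γ δ : ℝ) (x : V → ℝ) : IsEdgeWeight G (wt G γ δ x) where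
  pos_of_adj a b h := by rw [wt, if_pos h]; positivity
  eq_zero_of_not_adj a b h := by rw [wt, if_neg h]

theorem sum_wt_mul_sub_eq_zero_of_F_eq_zero [Fintype V] [DecidableEq V] {Z : Finset V}
    {γ δ : ℝ} {x : V → ℝ} {k : V}
    (hk : k ∉ Z) (hnbr : ∃ j, G.Adj k j) (hF : F G Z γ δ x k = 0) :
    ∑ j, wt G γ δ x k j * (x j - x k) = 0 := by
  rw [F, if_neg hk, div_eq_zero_iff] at hF
  obtain ⟨j, hj⟩ := hnbr
  have hw := isEdgeWeight_wt G γ δ x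
  exact hF.resolve_right (sum_pos' (fun l _ => hw.nonneg k l) ⟨j, mem_univ j, hw.pos_of_adj hj⟩).ne'

end SBCM

theorem stmt_10_general {V : Type*} [Fintype V] [DecidableEq V]
    (G : SimpleGraph V) [DecidableRel G.Adj] (Z : Finset V)
    (hnbr : ∀ i : V, i ∉ Z → ∃ j, G.Adj i j)
    (hconn : G.Connected) (hZ : Z.Nonempty)
    (I J : Set V)
    (hdisj : ∀ v : V, ¬(v ∈ I ∧ v ∈ J))
    (i : V) (hiI : i ∈ I)
    (hcut : ∀ j ∈ J, ∀ z ∈ Z, ∀ p : G.Walk j z, i ∈ p.support)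
    (γ δ : ℝ)
    (x : V → ℝ) (hss : ∀ k, SBCM.F G Z γ δ x k = 0) :
    ∀ j ∈ J, x j = x i :=
  (SBCM.isEdgeWeight_wt G γ δ x).eq_of_forall_walk_mem_support (Z := (Z : Set V))
    (fun k hk => SBCM.sum_wt_mul_sub_eq_zero_of_F_eq_zero G hk (hnbr k hk) (hss k))
    hconn (coe_nonempty.2 hZ) (fun hiJ => hdisj i ⟨hiI, hiJ⟩) hcut

/-- If `𝒢` is connected, `J` contains no zealots, and every path from a
node of `J` to a zealot passes through the node `i ∈ I`, then at every steady state
`x` of the SBCM one has `x_j = x_i` for all `j ∈ J`. -/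
theorem stmt_10 {V : Type*} [Fintype V] [DecidableEq V]
    (G : SimpleGraph V) [DecidableRel G.Adj] (Z : Finset V)
    (hnbr : ∀ i : V, i ∉ Z → ∃ j, G.Adj i j)
    (hconn : G.Connected) (hZ : Z.Nonempty)
    (I J : Set V)
    (hcover : ∀ v : V, v ∈ I ∨ v ∈ J)
    (hdisj : ∀ v : V, ¬(v ∈ I ∧ v ∈ J))
    (hJZ : ∀ v ∈ J, v ∉ Z)
    (i : V) (hiI : i ∈ I)
    (hcut : ∀ j ∈ J, ∀ z ∈ Z, ∀ p : G.Walk j z, i ∈ p.support)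
    (γ δ : ℝ) (hγ : 0 ≤ γ) (hδ : 0 ≤ δ)
    (x : V → ℝ) (hss : ∀ k, SBCM.F G Z γ δ x k = 0) :
    ∀ j ∈ J, x j = x i :=
  stmt_10_general G Z hnbr hconn hZ I J hdisj i hiI hcut γ δ x hss
end

section
/- Suppose 𝒢 satisfies balanced exposure. Then for every γ ≥ 0 and δ ≥ 0, the harmonic state x̄ — the opinion vector with x̄_i = 0 for every persuadable node i and zealot opinions −1 and +1 — is a steady state of the SBCM, i.e., F_γ(x̄) = 0. -/
open Finset Filter

namespace SBCM

/-- The harmonic state of a balanced-exposure graph: zealot `z₁` holds opinion `−1`,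
zealot `z₂` holds opinion `+1`, and all persuadable nodes hold opinion `0`. -/
noncomputable def xbarBE {V : Type*} [DecidableEq V] (z₁ z₂ : V) : V → ℝ :=
  fun v => if v = z₁ then -1 else if v = z₂ then 1 else 0

end SBCM

namespace SBCM

variable {V : Type*}

lemma wt_eq_wt_of_adj_iff (G : SimpleGraph V) [DecidableRel G.Adj] (γ δ : ℝ) (x : V → ℝ)
    {i j k : V} (hadj : G.Adj i j ↔ G.Adj i k) (hdist : (x i - x j) ^ 2 = (x i - x k) ^ 2) :
    wt G γ δ x i j = wt G γ δ x i k := by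
  simp only [wt, hadj, hdist]

variable [DecidableEq V]

lemma xbarBE_eq_zero {z₁ z₂ v : V} (hv : v ∉ ({z₁, z₂} : Finset V)) : xbarBE z₁ z₂ v = 0 := by
  simp_all [xbarBE]

variable [Fintype V]

lemma F_eq_zero_of_sum_eq_zero (G : SimpleGraph V) [DecidableRel G.Adj] (Z : Finset V)
    (γ δ : ℝ) (x : V → ℝ) (i : V) (h : ∑ j, wt G γ δ x i j * (x j - x i) = 0) :
    F G Z γ δ x i = 0 := by
  simp only [F, h, zero_div, ite_self]

/-- At a persuadable node the pulls of the two zealots have equal weight and opposite sign. -/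
lemma sum_wt_mul_xbarBE_sub_eq_zero (G : SimpleGraph V) [DecidableRel G.Adj] {z₁ z₂ : V}
    (hzz : z₁ ≠ z₂) (γ δ : ℝ) {i : V} (hi : i ∉ ({z₁, z₂} : Finset V))
    (hBE : G.Adj i z₁ ↔ G.Adj i z₂) :
    ∑ j, wt G γ δ (xbarBE z₁ z₂) i j * (xbarBE z₁ z₂ j - xbarBE z₁ z₂ i) = 0 := by
  have hxz₁ : xbarBE z₁ z₂ z₁ = -1 := by simp [xbarBE]
  have hxz₂ : xbarBE z₁ z₂ z₂ = 1 := by simp [xbarBE, hzz.symm]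
  have hwt : wt G γ δ (xbarBE z₁ z₂) i z₁ = wt G γ δ (xbarBE z₁ z₂) i z₂ :=
    wt_eq_wt_of_adj_iff G γ δ _ hBE (by rw [xbarBE_eq_zero hi, hxz₁, hxz₂]; norm_num)
  rw [← Finset.sum_subset (Finset.subset_univ {z₁, z₂}) fun j _ hj => by
      rw [xbarBE_eq_zero hj, xbarBE_eq_zero hi, sub_zero, mul_zero],
    Finset.sum_pair hzz, xbarBE_eq_zero hi, hxz₁, hxz₂, hwt]
  ring

end SBCM

theorem stmt_16_general {V : Type*} [Fintype V] [DecidableEq V]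
    (G : SimpleGraph V) [DecidableRel G.Adj] (z₁ z₂ : V) (hzz : z₁ ≠ z₂)
    (hBE : ∀ i : V, i ∉ ({z₁, z₂} : Finset V) → (G.Adj i z₁ ↔ G.Adj i z₂))
    (γ δ : ℝ) :
    ∀ i, SBCM.F G ({z₁, z₂} : Finset V) γ δ (SBCM.xbarBE z₁ z₂) i = 0 := by
  intro i
  by_cases hi : i ∈ ({z₁, z₂} : Finset V)
  · simp [SBCM.F, hi]
  · exact SBCM.F_eq_zero_of_sum_eq_zero G _ γ δ _ i
      (SBCM.sum_wt_mul_xbarBE_sub_eq_zero G hzz γ δ hi (hBE i hi))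

/-- On a balanced-exposure graph (two zealots with opinions `−1` and
`+1`, and every persuadable node adjacent to both zealots or to neither), the harmonic
state (all persuadable opinions `0`) is a steady state of the SBCM for all
`γ, δ ≥ 0`. -/
theorem stmt_16 {V : Type*} [Fintype V] [DecidableEq V]
    (G : SimpleGraph V) [DecidableRel G.Adj] (z₁ z₂ : V) (hzz : z₁ ≠ z₂)
    (hnbr : ∀ i : V, i ∉ ({z₁, z₂} : Finset V) → ∃ j, G.Adj i j)
    (hBE : ∀ i : V, i ∉ ({z₁, z₂} : Finset V) → (G.Adj i z₁ ↔ G.Adj i z₂))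
    (γ δ : ℝ) (hγ : 0 ≤ γ) (hδ : 0 ≤ δ) :
    ∀ i, SBCM.F G ({z₁, z₂} : Finset V) γ δ (SBCM.xbarBE z₁ z₂) i = 0 :=
  stmt_16_general G z₁ z₂ hzz hBE γ δ
end
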